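/- Let G be the presented group on generators A₁, A₃, B, V with relators expressing: A₁A₃ = A₃A₁; A₁BA₁ = BA₁B; A₃BA₃ = BA₃B; VA₁V⁻¹ = A₁⁻¹; VBV⁻¹ = B⁻¹; and V² = (A₁²A₃B)³. Set W := V⁻¹A₃V. Then in G the following identities hold: (a) V⁻¹A₃V = VA₃V⁻¹; (b) A₁W = WA₁; (c) WV = VA₃ (and more generally WⁱV = VA₃ⁱ for every integer i); (d) B⁻¹WB⁻¹ = WB⁻¹W; (e) BW⁻¹B = W⁻¹BW⁻¹. -/
import Mathlib


namespace ModN31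

/-- Generators `A₁, A₃, B, V` of the presentation of `Mod(N_{3,1})`. -/
inductive GenV : Type
  | A1 | A3 | B | V

open FreeGroup

/-- Relators (each relation `w₁ = w₂` is encoded as `w₁ * w₂⁻¹`):
`A₁A₃ = A₃A₁`; `A₁BA₁ = BA₁B`; `A₃BA₃ = BA₃B`; `V A₁ V⁻¹ = A₁⁻¹`; `V B V⁻¹ = B⁻¹`;
`V² = (A₁²A₃B)³`. -/
def relsV : Set (FreeGroup GenV) :=
  { of .A1 * of .A3 * (of .A3 * of .A1)⁻¹,
    of .A1 * of .B * of .A1 * (of .B * of .A1 * of .B)⁻¹,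
    of .A3 * of .B * of .A3 * (of .B * of .A3 * of .B)⁻¹,
    of .V * of .A1 * (of .V)⁻¹ * of .A1,
    of .V * of .B * (of .V)⁻¹ * of .B,
    (of .V) ^ 2 * (((of .A1) ^ 2 * of .A3 * of .B) ^ 3)⁻¹ }

/-- The presented group `G`, the mapping class group `Mod(N_{3,1})`. -/
abbrev G : Type := PresentedGroup relsV

def A1 : G := PresentedGroup.of GenV.A1
def A3 : G := PresentedGroup.of GenV.A3
def B : G := PresentedGroup.of GenV.B
def V : G := PresentedGroup.of GenV.V

/-- The Dehn twist `W = V⁻¹ A₃ V`. -/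
def W : G := V⁻¹ * A3 * V

lemma mk_rel {r : FreeGroup GenV} (hr : r ∈ relsV) : PresentedGroup.mk relsV r = 1 :=
  (QuotientGroup.eq_one_iff r).mpr (Subgroup.subset_normalClosure hr)

lemma hac : A1 * A3 = A3 * A1 := by
  have h := mk_rel (show of .A1 * of .A3 * (of .A3 * of .A1)⁻¹ ∈ relsV by simp [relsV])
  simp only [MonoidHom.map_mul, MonoidHom.map_inv] at h
  rw [mul_inv_eq_one] at h
  exact h

lemma hab : A1 * B * A1 = B * A1 * B := by
  have h := mk_rel (show of .A1 * of .B * of .A1 * (of .B * of .A1 * of .B)⁻¹ ∈ relsV by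
    simp [relsV])
  simp only [MonoidHom.map_mul, MonoidHom.map_inv] at h
  rw [mul_inv_eq_one] at h
  exact h

lemma hcb : A3 * B * A3 = B * A3 * B := by
  have h := mk_rel (show of .A3 * of .B * of .A3 * (of .B * of .A3 * of .B)⁻¹ ∈ relsV by
    simp [relsV])
  simp only [MonoidHom.map_mul, MonoidHom.map_inv] at h
  rw [mul_inv_eq_one] at h
  exact h

lemma hva : V * A1 * V⁻¹ = A1⁻¹ := by
  have h := mk_rel (show of .V * of .A1 * (of .V)⁻¹ * of .A1 ∈ relsV by simp [relsV])
  simp only [MonoidHom.map_mul, MonoidHom.map_inv] at h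
  rw [mul_eq_one_iff_eq_inv] at h
  exact h

lemma hvb : V * B * V⁻¹ = B⁻¹ := by
  have h := mk_rel (show of .V * of .B * (of .V)⁻¹ * of .B ∈ relsV by simp [relsV])
  simp only [MonoidHom.map_mul, MonoidHom.map_inv] at h
  rw [mul_eq_one_iff_eq_inv] at h
  exact h

lemma hv2 : V ^ 2 = (A1 ^ 2 * A3 * B) ^ 3 := by
  have h := mk_rel (show (of .V) ^ 2 * (((of .A1) ^ 2 * of .A3 * of .B) ^ 3)⁻¹ ∈ relsV by
    simp [relsV])
  simp only [MonoidHom.map_mul, MonoidHom.map_inv, MonoidHom.map_pow] at h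
  rw [mul_inv_eq_one] at h
  exact h

/-- `A₃` commutes with `V² = (A₁²A₃B)³`. -/
lemma key : A3 * (V * V) = V * V * A3 := by
  have pac : ∀ x : G, A1 * (A3 * x) = A3 * (A1 * x) := fun x => by
    simp only [← mul_assoc]; rw [hac]
  have pab : ∀ x : G, A1 * (B * (A1 * x)) = B * (A1 * (B * x)) := fun x => by
    simp only [← mul_assoc]; rw [hab]
  have pcb : ∀ x : G, A3 * (B * (A3 * x)) = B * (A3 * (B * x)) := fun x => by
    simp only [← mul_assoc]; rw [hcb]
  have ecb : A3 * (B * A3) = B * (A3 * B) := by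
    simp only [← mul_assoc]; rw [hcb]
  have hvv : V * V = (A1 ^ 2 * A3 * B) ^ 3 := by rw [← pow_two, hv2]
  rw [hvv]
  calc A3 * (A1 ^ 2 * A3 * B) ^ 3
      _ = A3 * (A1 * (A1 * (A3 * (B * (A1 * (A1 * (A3 * (B * (A1 * (A1 * (A3 * (B)))))))))))) := by simp [pow_succ, pow_zero, mul_assoc]
      _ = A1 * (A3 * (A1 * (A3 * (B * (A1 * (A1 * (A3 * (B * (A1 * (A1 * (A3 * (B)))))))))))) := by nth_rewrite 1 [← pac]; rfl
      _ = A1 * (A1 * (A3 * (A3 * (B * (A1 * (A1 * (A3 * (B * (A1 * (A1 * (A3 * (B)))))))))))) := by nth_rewrite 1 [← pac]; rfl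
      _ = A1 * (A1 * (A3 * (A3 * (B * (A1 * (A3 * (A1 * (B * (A1 * (A1 * (A3 * (B)))))))))))) := by nth_rewrite 2 [pac]; rfl
      _ = A1 * (A1 * (A3 * (A3 * (B * (A3 * (A1 * (A1 * (B * (A1 * (A1 * (A3 * (B)))))))))))) := by nth_rewrite 2 [pac]; rfl
      _ = A1 * (A1 * (A3 * (B * (A3 * (B * (A1 * (A1 * (B * (A1 * (A1 * (A3 * (B)))))))))))) := by nth_rewrite 1 [pcb]; rfl
      _ = A1 * (A1 * (A3 * (B * (A3 * (B * (A1 * (B * (A1 * (B * (A1 * (A3 * (B)))))))))))) := by nth_rewrite 1 [pab]; rfl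
      _ = A1 * (A1 * (A3 * (B * (A3 * (A1 * (B * (A1 * (A1 * (B * (A1 * (A3 * (B)))))))))))) := by nth_rewrite 1 [← pab]; rfl
      _ = A1 * (A1 * (A3 * (B * (A1 * (A3 * (B * (A1 * (A1 * (B * (A1 * (A3 * (B)))))))))))) := by nth_rewrite 1 [← pac]; rfl
      _ = A1 * (A1 * (A3 * (B * (A1 * (A3 * (B * (A1 * (B * (A1 * (B * (A3 * (B)))))))))))) := by nth_rewrite 1 [pab]; rfl
      _ = A1 * (A1 * (A3 * (B * (A1 * (A3 * (A1 * (B * (A1 * (A1 * (B * (A3 * (B)))))))))))) := by nth_rewrite 1 [← pab]; rfl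
      _ = A1 * (A1 * (A3 * (B * (A1 * (A1 * (A3 * (B * (A1 * (A1 * (B * (A3 * (B)))))))))))) := by nth_rewrite 1 [← pac]; rfl
      _ = A1 * (A1 * (A3 * (B * (A1 * (A1 * (A3 * (B * (A1 * (A1 * (A3 * (B * (A3)))))))))))) := by nth_rewrite 1 [← ecb]; rfl
      _ = (A1 ^ 2 * A3 * B) ^ 3 * A3 := by simp [pow_succ, pow_zero, mul_assoc]

/-- Identities satisfied by `W = V⁻¹A₃V` in `G`. -/
theorem W_identities :
    V⁻¹ * A3 * V = V * A3 * V⁻¹ ∧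
    A1 * W = W * A1 ∧
    W * V = V * A3 ∧
    (∀ i : ℤ, W ^ i * V = V * A3 ^ i) ∧
    B⁻¹ * W * B⁻¹ = W * B⁻¹ * W ∧
    B * W⁻¹ * B = W⁻¹ * B * W⁻¹ := by
  have hW : W = V⁻¹ * A3 * V := rfl
  have pa : V⁻¹ * A3 * V = V * A3 * V⁻¹ := by
    calc V⁻¹ * A3 * V = V⁻¹ * (A3 * (V * V)) * V⁻¹ := by group
      _ = V⁻¹ * (V * V * A3) * V⁻¹ := by rw [key]
      _ = V * A3 * V⁻¹ := by group
  have pc : W * V = V * A3 := by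
    rw [hW]
    calc V⁻¹ * A3 * V * V = V⁻¹ * (A3 * (V * V)) := by group
      _ = V⁻¹ * (V * V * A3) := by rw [key]
      _ = V * A3 := by group
  have pci : ∀ i : ℤ, W ^ i * V = V * A3 ^ i := by
    intro i
    have hWi : W ^ i = V⁻¹ * A3 ^ i * V := by
      rw [hW]
      simpa using conj_zpow (i := i) (a := V⁻¹) (b := A3)
    have hcom : Commute A3 (V * V) := key
    calc W ^ i * V = V⁻¹ * (A3 ^ i * (V * V)) := by rw [hWi]; group
      _ = V⁻¹ * (V * V * A3 ^ i) := by rw [(hcom.zpow_left i).eq]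
      _ = V * A3 ^ i := by group
  have hs : A1 * V⁻¹ = V⁻¹ * A1⁻¹ := by
    calc A1 * V⁻¹ = V⁻¹ * (V * A1 * V⁻¹) := by group
      _ = V⁻¹ * A1⁻¹ := by rw [hva]
  have ht2 : A1⁻¹ * V = V * A1 := by
    calc A1⁻¹ * V = (V * A1 * V⁻¹) * V := by rw [hva]
      _ = V * A1 := by group
  have hca : A1⁻¹ * A3 = A3 * A1⁻¹ := by
    have h : Commute A1 A3 := hac
    exact h.inv_left.eq
  have pb : A1 * W = W * A1 := by
    rw [hW]
    calc A1 * (V⁻¹ * A3 * V) = (A1 * V⁻¹) * A3 * V := by group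
      _ = (V⁻¹ * A1⁻¹) * A3 * V := by rw [hs]
      _ = V⁻¹ * (A1⁻¹ * A3) * V := by group
      _ = V⁻¹ * (A3 * A1⁻¹) * V := by rw [hca]
      _ = (V⁻¹ * A3) * (A1⁻¹ * V) := by group
      _ = (V⁻¹ * A3) * (V * A1) := by rw [ht2]
      _ = V⁻¹ * A3 * V * A1 := by group
  have hvb_inv : V * B⁻¹ * V⁻¹ = B := by
    calc V * B⁻¹ * V⁻¹ = (V * B * V⁻¹)⁻¹ := by group
      _ = B⁻¹⁻¹ := by rw [hvb]
      _ = B := by group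
  have hb4 : V * B⁻¹ = B * V := by
    calc V * B⁻¹ = (V * B⁻¹ * V⁻¹) * V := by group
      _ = B * V := by rw [hvb_inv]
  have hb3 : B⁻¹ * V⁻¹ = V⁻¹ * B := by
    calc B⁻¹ * V⁻¹ = V⁻¹ * (V * B⁻¹ * V⁻¹) := by group
      _ = V⁻¹ * B := by rw [hvb_inv]
  have pd : B⁻¹ * W * B⁻¹ = W * B⁻¹ * W := by
    rw [hW]
    calc B⁻¹ * (V⁻¹ * A3 * V) * B⁻¹ = (B⁻¹ * V⁻¹) * A3 * (V * B⁻¹) := by group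
      _ = (V⁻¹ * B) * A3 * (B * V) := by rw [hb3, hb4]
      _ = V⁻¹ * (B * A3 * B) * V := by group
      _ = V⁻¹ * (A3 * B * A3) * V := by rw [← hcb]
      _ = (V⁻¹ * A3) * (B * V) * (V⁻¹ * A3 * V) := by group
      _ = (V⁻¹ * A3) * (V * B⁻¹) * (V⁻¹ * A3 * V) := by rw [← hb4]
      _ = V⁻¹ * A3 * V * B⁻¹ * (V⁻¹ * A3 * V) := by group
  have pe : B * W⁻¹ * B = W⁻¹ * B * W⁻¹ := by
    have h := congrArg (·⁻¹) pd
    simp only [mul_inv_rev, inv_inv] at h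
    rw [mul_assoc, h]
    group
  exact ⟨pa, pb, pc, pci, pd, pe⟩

end ModN31
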